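/- arXiv:2503.19093 — 2 statements merged into one kernel-verified Lean document; each statement's English description precedes it below -/
import Mathlib

section
/- Let (X, ρ) be a finite distance space and let Z ⊆ X be an independent set with |Z| ≥ 2. If for every x, y ∈ X \ Z the subspace (Z ∪ {x, y}, ρ) is (|Z| − 1)-embeddable, then (X, ρ) is strongly (|Z| − 1)-embeddable. -/
/-- `(X, ρ)` is a distance space: `ρ` is symmetric, nonnegative and vanishes on the
diagonal on the points of `X`. -/
def IsDistance {α : Type*} (X : Finset α) (ρ : α → α → ℝ) : Prop :=
  (∀ x ∈ X, ∀ y ∈ X, ρ x y = ρ y x) ∧ (∀ x ∈ X, ∀ y ∈ X, 0 ≤ ρ x y) ∧ (∀ x ∈ X, ρ x x = 0)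

/-- `(X, ρ)` is isometrically embeddable into `ℝ^d`. -/
def IsEmbeddable {α : Type*} (X : Finset α) (ρ : α → α → ℝ) (d : ℕ) : Prop :=
  ∃ φ : α → EuclideanSpace ℝ (Fin d), ∀ x ∈ X, ∀ y ∈ X, ρ x y = dist (φ x) (φ y)

/-- `(X, ρ)` is strongly `d`-embeddable: `d`-embeddable but (for `d ≥ 1`)
not `(d-1)`-embeddable. -/
def IsStronglyEmbeddable {α : Type*} (X : Finset α) (ρ : α → α → ℝ) (d : ℕ) : Prop :=
  IsEmbeddable X ρ d ∧ (0 < d → ¬ IsEmbeddable X ρ (d - 1))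

/-- A nonempty set `Y` with `|Y| = r + 1` is independent if `(Y, ρ)` is strongly
`r`-embeddable. -/
def IsIndependent {α : Type*} (Y : Finset α) (ρ : α → α → ℝ) : Prop :=
  Y.Nonempty ∧ IsStronglyEmbeddable Y ρ (Y.card - 1)

/-!
Fix `o ∈ Z` and an embedding `φ` of `Z` in `ℝⁿ`, `n = |Z| - 1`. As `Z` is not
`(n - 1)`-embeddable, the vectors `φ z - φ o` (`z ∈ Z \ {o}`) form a basis `b` of `ℝⁿ`. Send each
`x ∈ X` to the point `u x` with `⟪b_z, u x⟫ = (ρ(z, o)² + ρ(x, o)² - ρ(z, x)²) / 2`: these are the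
inner products that any embedding of `Z ∪ {x}` realises. Given `x, y ∈ X`, an embedding `ψ` of
`Z ∪ {x, y}` yields a frame `ψ z - ψ o` with the same Gram matrix as `b`, hence a linear isometry
`L` carrying `b` onto it; comparing inner products with the frame gives `L (u x) = ψ x - ψ o`, so
`dist (u x) (u y) = dist (ψ x) (ψ y) = ρ(x, y)`.
-/

open scoped RealInnerProductSpace
open Module Finset

section LinearIsometry

variable {ι E F : Type*} [NormedAddCommGroup E] [InnerProductSpace ℝ E]
  [NormedAddCommGroup F] [InnerProductSpace ℝ F]

theorem Module.Basis.exists_linearIsometry_of_inner_eq [Fintype ι] (b : Basis ι ℝ E)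
    (w : ι → F) (h : ∀ i j, ⟪b i, b j⟫ = ⟪w i, w j⟫) : ∃ L : E →ₗᵢ[ℝ] F, ∀ i, L (b i) = w i := by
  have hL : ∀ x y, ⟪b.constr ℝ w x, b.constr ℝ w y⟫ = ⟪x, y⟫ := by
    intro x y
    rw [← b.sum_repr x, ← b.sum_repr y]
    simp only [map_sum, map_smul, b.constr_basis, sum_inner, inner_sum, real_inner_smul_left,
      real_inner_smul_right, h]
  exact ⟨(b.constr ℝ w).isometryOfInner hL, b.constr_basis ℝ w⟩

theorem Module.Basis.exists_inner_eq [FiniteDimensional ℝ E] (b : Basis ι ℝ E) (c : ι → ℝ) :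
    ∃ x, ∀ i, ⟪b i, x⟫ = c i := by
  refine ⟨(InnerProductSpace.toDual ℝ E).symm (b.constr ℝ c).toContinuousLinearMap,
    fun i => ?_⟩
  rw [real_inner_comm, InnerProductSpace.toDual_symm_apply]
  simp

theorem exists_linearIsometry_euclideanSpace_of_finrank_le [FiniteDimensional ℝ E] {d : ℕ}
    (hd : finrank ℝ E ≤ d) : Nonempty (E →ₗᵢ[ℝ] EuclideanSpace ℝ (Fin d)) := by
  let b := stdOrthonormalBasis ℝ E
  have hw : Orthonormal ℝ fun i => EuclideanSpace.single (Fin.castLE hd i) (1 : ℝ) :=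
    EuclideanSpace.orthonormal_single.comp _ (Fin.castLE_injective hd)
  obtain ⟨L, -⟩ := b.toBasis.exists_linearIsometry_of_inner_eq
    (fun i => EuclideanSpace.single (Fin.castLE hd i) (1 : ℝ)) fun i j => by
    rw [b.coe_toBasis, orthonormal_iff_ite.1 b.orthonormal, orthonormal_iff_ite.1 hw]
  exact ⟨L⟩

end LinearIsometry

section DistanceSpace

variable {α E : Type*} [NormedAddCommGroup E] [InnerProductSpace ℝ E] {ρ : α → α → ℝ}

noncomputable def distGram (ρ : α → α → ℝ) (o a b : α) : ℝ :=
  (ρ a o ^ 2 + ρ b o ^ 2 - ρ a b ^ 2) / 2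

theorem inner_sub_sub_eq_distGram {S : Finset α} {ψ : α → E}
    (hψ : ∀ x ∈ S, ∀ y ∈ S, ρ x y = dist (ψ x) (ψ y)) {o a b : α} (ho : o ∈ S) (ha : a ∈ S)
    (hb : b ∈ S) : ⟪ψ a - ψ o, ψ b - ψ o⟫ = distGram ρ o a b := by
  rw [real_inner_eq_norm_mul_self_add_norm_mul_self_sub_norm_sub_mul_self_div_two,
    sub_sub_sub_cancel_right, distGram, hψ a ha o ho, hψ b hb o ho, hψ a ha b hb,
    dist_eq_norm, dist_eq_norm, dist_eq_norm]
  ring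

theorem IsEmbeddable.mono {S T : Finset α} {d : ℕ} (h : IsEmbeddable T ρ d) (hST : S ⊆ T) :
    IsEmbeddable S ρ d :=
  let ⟨φ, hφ⟩ := h
  ⟨φ, fun x hx y hy => hφ x (hST hx) y (hST hy)⟩

theorem isEmbeddable_of_forall_mem_submodule {S : Finset α} {ψ : α → E}
    (hψ : ∀ x ∈ S, ∀ y ∈ S, ρ x y = dist (ψ x) (ψ y)) (W : Submodule ℝ E)
    [FiniteDimensional ℝ W] {d : ℕ} (hd : finrank ℝ W ≤ d) (hW : ∀ x ∈ S, ψ x ∈ W) :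
    IsEmbeddable S ρ d := by
  classical
  obtain ⟨L⟩ := exists_linearIsometry_euclideanSpace_of_finrank_le hd
  refine ⟨fun x => if hx : ψ x ∈ W then L ⟨ψ x, hx⟩ else 0, fun x hx y hy => ?_⟩
  dsimp only
  rw [dif_pos (hW x hx), dif_pos (hW y hy), L.dist_map, Subtype.dist_eq, hψ x hx y hy]

theorem span_range_sub_eq_top [DecidableEq α] {Z : Finset α} {d : ℕ}
    {φ : α → EuclideanSpace ℝ (Fin d)}    (hφ : ∀ x ∈ Z, ∀ y ∈ Z, ρ x y = dist (φ x) (φ y)) (o : α)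
    (hZ : 0 < d → ¬ IsEmbeddable Z ρ (d - 1)) :
    Submodule.span ℝ (Set.range fun x : Z.erase o => φ x - φ o) = ⊤ := by
  set W := Submodule.span ℝ (Set.range fun x : Z.erase o => φ x - φ o)
  by_contra hW
  have hlt := Submodule.finrank_lt hW
  rw [finrank_euclideanSpace_fin] at hlt
  refine hZ (by omega) (isEmbeddable_of_forall_mem_submodule (ψ := fun x => φ x - φ o)
    (fun x hx y hy => by rw [hφ x hx y hy, dist_sub_right]) W (by omega) fun x hx => ?_)
  by_cases hxo : x = o
  · simp [hxo]
  · exact Submodule.subset_span ⟨⟨x, mem_erase.2 ⟨hxo, hx⟩⟩, rfl⟩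

theorem isEmbeddable_insert_insert [DecidableEq α] {X Z : Finset α} {d : ℕ}
    (hZ : IsEmbeddable Z ρ d)
    (h : ∀ x ∈ X \ Z, ∀ y ∈ X \ Z, IsEmbeddable (insert x (insert y Z)) ρ d) {a b : α}
    (ha : a ∈ X) (hb : b ∈ X) : IsEmbeddable (insert a (insert b Z)) ρ d := by
  by_cases haZ : a ∈ Z <;> by_cases hbZ : b ∈ Z
  · rwa [insert_eq_of_mem (mem_insert_of_mem haZ), insert_eq_of_mem hbZ]
  · rw [insert_eq_of_mem (mem_insert_of_mem haZ)]
    exact (h b (mem_sdiff.2 ⟨hb, hbZ⟩) b (mem_sdiff.2 ⟨hb, hbZ⟩)).mono (subset_insert _ _)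
  · rw [insert_eq_of_mem hbZ]
    exact (h a (mem_sdiff.2 ⟨ha, haZ⟩) a (mem_sdiff.2 ⟨ha, haZ⟩)).mono
      (insert_subset_insert _ (subset_insert _ _))
  · exact h a (mem_sdiff.2 ⟨ha, haZ⟩) b (mem_sdiff.2 ⟨hb, hbZ⟩)

variable [FiniteDimensional ℝ E] {ι : Type*} [Fintype ι] {o : α} {z : ι → α}

theorem eq_dist_of_inner_eq_distGram (b : Basis ι ℝ E)
    (hb : ∀ i j, ⟪b i, b j⟫ = distGram ρ o (z i) (z j)) {S : Finset α} {ψ : α → E}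
    (hψ : ∀ x ∈ S, ∀ y ∈ S, ρ x y = dist (ψ x) (ψ y)) (ho : o ∈ S) (hz : ∀ i, z i ∈ S)
    {a a' : α} (ha : a ∈ S) (ha' : a' ∈ S) {p p' : E}
    (hp : ∀ i, ⟪b i, p⟫ = distGram ρ o (z i) a)
    (hp' : ∀ i, ⟪b i, p'⟫ = distGram ρ o (z i) a') :
    ρ a a' = dist p p' := by
  obtain ⟨L, hL⟩ := b.exists_linearIsometry_of_inner_eq (fun i => ψ (z i) - ψ o)
    fun i j => by rw [hb, inner_sub_sub_eq_distGram hψ ho (hz i) (hz j)]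
  let L' := L.toLinearIsometryEquiv rfl
  have hL' : ∀ x ∈ S, ∀ q : E, (∀ i, ⟪b i, q⟫ = distGram ρ o (z i) x) →
      L' q = ψ x - ψ o := by
    intro x hx q hq
    refine InnerProductSpace.ext_inner_left_basis (b.map L'.toLinearEquiv) fun i => ?_
    rw [Basis.map_apply, LinearIsometryEquiv.coe_toLinearEquiv, L'.inner_map_map, hq,
      LinearIsometry.coe_toLinearIsometryEquiv, hL,
      inner_sub_sub_eq_distGram hψ ho (hz i) hx]
  rw [hψ a ha a' ha', ← dist_sub_right _ _ (ψ o), ← hL' a ha p hp, ← hL' a' ha' p' hp',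
    L'.dist_map]

end DistanceSpace

theorem stmt8_general {α : Type*} [DecidableEq α] (X : Finset α) (ρ : α → α → ℝ)
    (Z : Finset α) (hZX : Z ⊆ X) (hZ : IsIndependent Z ρ)
    (h : ∀ x ∈ X \ Z, ∀ y ∈ X \ Z, IsEmbeddable (insert x (insert y Z)) ρ (Z.card - 1)) :
    IsStronglyEmbeddable X ρ (Z.card - 1) := by
  obtain ⟨⟨o, ho⟩, ⟨φ, hφ⟩, hZlow⟩ := hZ
  refine ⟨?_, fun hpos hX => hZlow hpos (hX.mono hZX)⟩
  have hcard : Fintype.card (Z.erase o) = finrank ℝ (EuclideanSpace ℝ (Fin (Z.card - 1))) :=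
    by simp [card_erase_of_mem ho]
  let b := basisOfTopLeSpanOfCardEqFinrank _ (span_range_sub_eq_top hφ o hZlow).ge hcard
  have hzZ (i : Z.erase o) : (i : α) ∈ Z := mem_of_mem_erase i.2
  have hb : ∀ i j, ⟪b i, b j⟫ = distGram ρ o i j := fun i j => by
    simp only [b, coe_basisOfTopLeSpanOfCardEqFinrank]
    exact inner_sub_sub_eq_distGram hφ ho (hzZ i) (hzZ j)
  choose u hu using fun x => b.exists_inner_eq fun i => distGram ρ o i x
  refine ⟨u, fun a ha a' ha' => ?_⟩
  obtain ⟨ψ, hψ⟩ := isEmbeddable_insert_insert ⟨φ, hφ⟩ h ha ha'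
  have hZS : Z ⊆ insert a (insert a' Z) := (subset_insert _ _).trans (subset_insert _ _)
  exact eq_dist_of_inner_eq_distGram b hb hψ (hZS ho) (fun i => hZS (hzZ i))
    (mem_insert_self _ _) (mem_insert_of_mem (mem_insert_self _ _)) (hu a) (hu a')

/-- if `Z ⊆ X` is independent with `|Z| ≥ 2` and for all `x, y ∈ X \ Z` the
subspace `Z ∪ {x, y}` is `(|Z| - 1)`-embeddable, then `(X, ρ)` is strongly
`(|Z| - 1)`-embeddable. -/
theorem stmt8 {α : Type*} [DecidableEq α] (X : Finset α) (ρ : α → α → ℝ)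
    (hD : IsDistance X ρ) (Z : Finset α) (hZX : Z ⊆ X) (hZcard : 2 ≤ Z.card)
    (hZ : IsIndependent Z ρ)
    (h : ∀ x ∈ X \ Z, ∀ y ∈ X \ Z, IsEmbeddable (insert x (insert y Z)) ρ (Z.card - 1)) :
    IsStronglyEmbeddable X ρ (Z.card - 1) :=
  stmt8_general X ρ Z hZX hZ h
end

section
/- Let (X, ρ) be a finite distance space that is d-embeddable for an integer d ≥ 1, let Y ⊊ X be an independent set, and let x ∈ X \ Y. Then (Y ∪ {x}, ρ) is |Y|-embeddable. -/
/-!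
Given an embedding `φ` of `X`, the points `φ a - φ x` for `a ∈ Y ∪ {x}` lie in the span of the
`|Y|` vectors `φ y - φ x`, a subspace of dimension at most `|Y|`; projecting onto it and
identifying it isometrically with a subspace of `ℝ^|Y|` embeds `Y ∪ {x}`.
-/

open Module

theorem exists_linearIsometry_of_finrank_le {E F : Type*}
    [NormedAddCommGroup E] [InnerProductSpace ℝ E] [FiniteDimensional ℝ E]
    [NormedAddCommGroup F] [InnerProductSpace ℝ F] [FiniteDimensional ℝ F]
    (h : finrank ℝ E ≤ finrank ℝ F) : Nonempty (E →ₗᵢ[ℝ] F) := by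
  let b := stdOrthonormalBasis ℝ E
  let c := stdOrthonormalBasis ℝ F
  let f : E →ₗ[ℝ] F := b.toBasis.constr ℝ (c ∘ Fin.castLE h)
  have hf : Orthonormal ℝ (f ∘ b.toBasis) := by
    convert c.orthonormal.comp _ (Fin.castLE_injective h) using 1
    funext i
    simp [f]
  exact ⟨f.isometryOfOrthonormal b.orthonormal hf⟩

theorem isEmbeddable_of_sub_mem_submodule {α E : Type*} [NormedAddCommGroup E] [InnerProductSpace ℝ E]
    {Z : Finset α} {ρ : α → α → ℝ} {φ : α → E}
    (hφ : ∀ a ∈ Z, ∀ b ∈ Z, ρ a b = dist (φ a) (φ b))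
    (S : Submodule ℝ E) [FiniteDimensional ℝ S] (o : E) (hS : ∀ a ∈ Z, φ a - o ∈ S)
    {n : ℕ} (hn : finrank ℝ S ≤ n) : IsEmbeddable Z ρ n := by
  obtain ⟨L⟩ := exists_linearIsometry_of_finrank_le (E := S) (F := EuclideanSpace ℝ (Fin n))
    (by rwa [finrank_euclideanSpace_fin])
  have hP : ∀ a ∈ Z, (S.orthogonalProjectionOnto (φ a - o) : E) = φ a - o := fun a ha =>
    congrArg Subtype.val (S.orthogonalProjectionOnto_mem_subspace_eq_self ⟨_, hS a ha⟩)
  refine ⟨fun a => L (S.orthogonalProjectionOnto (φ a - o)), fun a ha b hb => ?_⟩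
  rw [L.dist_map, Subtype.dist_eq, hP a ha, hP b hb, dist_sub_right]
  exact hφ a ha b hb

theorem stmt9_general {α : Type*} [DecidableEq α] (X : Finset α) (ρ : α → α → ℝ)
    (d : ℕ) (hX : IsEmbeddable X ρ d)
    (Y : Finset α) (hYX : Y ⊂ X)
    (x : α) (hx : x ∈ X) :
    IsEmbeddable (insert x Y) ρ Y.card := by
  obtain ⟨φ, hφ⟩ := hX
  have hsub : insert x Y ⊆ X := Finset.insert_subset hx hYX.subset
  let S : Submodule ℝ (EuclideanSpace ℝ (Fin d)) :=
    Submodule.span ℝ ↑(Y.image fun a => φ a - φ x)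
  refine isEmbeddable_of_sub_mem_submodule (fun a ha b hb => hφ a (hsub ha) b (hsub hb)) S (φ x) ?_
    ((finrank_span_finset_le_card _).trans Finset.card_image_le)
  intro a ha
  rcases Finset.mem_insert.1 ha with rfl | ha
  · simp
  · exact Submodule.subset_span (Finset.mem_image_of_mem _ ha)

/-- if `(X, ρ)` is `d`-embeddable, `Y ⊊ X` is independent and
`x ∈ X \ Y`, then `(Y ∪ {x}, ρ)` is `|Y|`-embeddable. -/
theorem stmt9 {α : Type*} [DecidableEq α] (X : Finset α) (ρ : α → α → ℝ)
    (hD : IsDistance X ρ) (d : ℕ) (hd : 1 ≤ d) (hX : IsEmbeddable X ρ d)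
    (Y : Finset α) (hYX : Y ⊂ X) (hY : IsIndependent Y ρ)
    (x : α) (hx : x ∈ X) (hxY : x ∉ Y) :
    IsEmbeddable (insert x Y) ρ Y.card :=
  stmt9_general X ρ d hX Y hYX x hx
end
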